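/- For β ≥ 1 and ε ∈ [0,1], every orbit of the coupled Gauss map lattice starting in [β, β+1]^N converges to the homogeneous fixed state (x*, ..., x*), where x* is the unique fixed point of f(x) = exp(-7.5 x²) + β. -/

import Mathlib

/-!
The local map `f y = exp (-7.5 y²) + β` sends `ℝ` into `[β, β + 1] ⊆ [1, ∞)`, and on `[1, ∞)` its
derivative is bounded by `|f' 1| = 15 e^{-7.5} < 1`. Each coordinate of the diffusively coupled
lattice is a convex combination of three values of `f`, so the lattice map sends the cube
`[β, β + 1]^N` into itself and is a sup-norm contraction there with the same constant. It fixes the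
homogeneous state `(x*, …, x*)`, so every orbit from the cube converges to it geometrically.
-/

open Set Filter Topology NNReal

lemma two_mul_mul_exp_neg_lt_one (a : ℝ) : 2 * a * Real.exp (-a) < 1 := by
  have h : 2 * a < Real.exp a := by
    rcases lt_or_ge a 0 with ha | ha
    · linarith [Real.exp_pos a]
    · nlinarith [Real.quadratic_le_exp_of_nonneg ha, sq_nonneg (a - 1)]
  calc 2 * a * Real.exp (-a) < Real.exp a * Real.exp (-a) := by gcongr
    _ = 1 := by rw [← Real.exp_add, add_neg_cancel, Real.exp_zero]

lemma mul_exp_neg_mul_sq_le {a x : ℝ} (ha : 1 / 2 ≤ a) (hx : 1 ≤ x) :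
    x * Real.exp (-a * x ^ 2) ≤ Real.exp (-a) := by
  have hfactor : 0 ≤ (x - 1) * (a * (x + 1) - 1) := mul_nonneg (by linarith) (by nlinarith)
  have hx_le : x ≤ Real.exp (a * (x ^ 2 - 1)) :=
    calc x ≤ a * (x ^ 2 - 1) + 1 := by nlinarith
      _ ≤ Real.exp (a * (x ^ 2 - 1)) := Real.add_one_le_exp _
  calc x * Real.exp (-a * x ^ 2)
      ≤ Real.exp (a * (x ^ 2 - 1)) * Real.exp (-a * x ^ 2) := by gcongr
    _ = Real.exp (-a) := by rw [← Real.exp_add]; ring_nf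

lemma exp_neg_mul_sq_add_mem_Icc {a : ℝ} (ha : 0 ≤ a) (b y : ℝ) :
    Real.exp (-a * y ^ 2) + b ∈ Icc b (b + 1) := by
  have : Real.exp (-a * y ^ 2) ≤ 1 := Real.exp_le_one_iff.mpr (by nlinarith [sq_nonneg y])
  constructor <;> linarith [Real.exp_pos (-a * y ^ 2)]

lemma lipschitzOnWith_exp_neg_mul_sq_add {a : ℝ} (ha : 1 / 2 ≤ a) (b : ℝ) :
    LipschitzOnWith (2 * a * Real.exp (-a)).toNNReal (fun y => Real.exp (-a * y ^ 2) + b)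
      (Ici 1) := by
  refine (convex_Ici 1).lipschitzOnWith_of_nnnorm_hasDerivWithin_le
    (fun x _ => ((((hasDerivAt_pow 2 x).const_mul (-a)).exp).add_const b).hasDerivWithinAt)
    fun x hx => ?_
  rw [← NNReal.coe_le_coe, coe_nnnorm, Real.coe_toNNReal _ (by positivity), Real.norm_eq_abs]
  have hx : 1 ≤ x := hx
  calc |Real.exp (-a * x ^ 2) * (-a * (2 * x ^ (2 - 1)))|
      = 2 * a * (x * Real.exp (-a * x ^ 2)) := by
        rw [pow_one, show ∀ u v : ℝ, u * (-a * (2 * v)) = -(2 * a * (v * u)) by intros; ring,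
          abs_neg, abs_of_nonneg (by positivity)]
    _ ≤ 2 * a * Real.exp (-a) := by gcongr; exact mul_exp_neg_mul_sq_le ha hx

theorem LipschitzOnWith.tendsto_iterate_of_isFixedPt {α : Type*} [PseudoMetricSpace α]
    {f : α → α} {s : Set α} {K : ℝ≥0} {p x : α} (hf : LipschitzOnWith K f s) (hK : K < 1)
    (hmaps : MapsTo f s s) (hp : p ∈ s) (hfp : Function.IsFixedPt f p) (hx : x ∈ s) :
    Tendsto (fun n => f^[n] x) atTop (𝓝 p) := by
  have hdist : ∀ n, dist (f^[n] x) p ≤ K ^ n * dist x p := by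
    intro n
    induction n with
    | zero => simp
    | succ n ih =>
      calc dist (f^[n + 1] x) p = dist (f (f^[n] x)) (f p) := by
            rw [Function.iterate_succ_apply', hfp.eq]
        _ ≤ K * dist (f^[n] x) p := hf.dist_le_mul _ (hmaps.iterate n hx) _ hp
        _ ≤ K * (K ^ n * dist x p) := by gcongr
        _ = K ^ (n + 1) * dist x p := by ring
  have hgeom : Tendsto (fun n => (K : ℝ) ^ n * dist x p) atTop (𝓝 0) := by
    simpa using (tendsto_pow_atTop_nhds_zero_of_lt_one K.2 hK).mul_const (dist x p)
  exact tendsto_iff_dist_tendsto_zero.mpr (squeeze_zero (fun _ => dist_nonneg) hdist hgeom)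

section DiffusiveCoupling

variable {N : ℕ} [NeZero N]

noncomputable def diffusiveCoupling (f : ℝ → ℝ) (ε : ℝ) (x : Fin N → ℝ) : Fin N → ℝ :=
  fun i => (1 - ε) * f (x i) + ε / 2 * (f (x (i + 1)) + f (x (i - 1)))

variable {f : ℝ → ℝ} {ε : ℝ} {s : Set ℝ}

lemma diffusiveCoupling_const (p : ℝ) :
    diffusiveCoupling f ε (fun _ : Fin N => p) = fun _ => f p := by
  funext i; simp only [diffusiveCoupling]; ring

lemma mapsTo_diffusiveCoupling (hs : Convex ℝ s) (hε : ε ∈ Icc 0 1) (hf : MapsTo f s s) :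
    MapsTo (diffusiveCoupling f ε) (univ.pi fun _ : Fin N => s) (univ.pi fun _ => s) := by
  intro x hx i _
  have hfx : ∀ j, f (x j) ∈ s := fun j => hf (hx j trivial)
  have hmid : (1 / 2 : ℝ) • f (x (i + 1)) + (1 / 2 : ℝ) • f (x (i - 1)) ∈ s :=
    hs (hfx _) (hfx _) (by norm_num) (by norm_num) (by norm_num)
  have := hs (hfx i) hmid (sub_nonneg.mpr hε.2) hε.1 (by ring)
  convert this using 1
  simp only [diffusiveCoupling, smul_eq_mul]; ring

lemma lipschitzOnWith_diffusiveCoupling {K : ℝ≥0} (hε : ε ∈ Icc 0 1)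
    (hf : LipschitzOnWith K f s) :
    LipschitzOnWith K (diffusiveCoupling f ε) (univ.pi fun _ : Fin N => s) := by
  refine LipschitzOnWith.of_dist_le_mul fun x hx y hy => ?_
  refine (dist_pi_le_iff (by positivity)).mpr fun i => ?_
  have hfi : ∀ j, |f (x j) - f (y j)| ≤ K * dist x y := fun j =>
    (hf.dist_le_mul _ (hx j trivial) _ (hy j trivial)).trans
      (mul_le_mul_of_nonneg_left (dist_le_pi_dist x y j) K.2)
  have hε₁ : 0 ≤ 1 - ε := sub_nonneg.mpr hε.2
  have hε₂ : 0 ≤ ε / 2 := div_nonneg hε.1 zero_le_two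
  rw [Real.dist_eq]
  calc |diffusiveCoupling f ε x i - diffusiveCoupling f ε y i|
      = |(1 - ε) * (f (x i) - f (y i)) + ε / 2 * ((f (x (i + 1)) - f (y (i + 1)))
          + (f (x (i - 1)) - f (y (i - 1))))| := by
        simp only [diffusiveCoupling]; ring_nf
    _ ≤ (1 - ε) * |f (x i) - f (y i)| + ε / 2 * (|f (x (i + 1)) - f (y (i + 1))|
          + |f (x (i - 1)) - f (y (i - 1))|) := by
        refine (abs_add_le _ _).trans (add_le_add ?_ ?_)
        · rw [abs_mul, abs_of_nonneg hε₁]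
        · rw [abs_mul, abs_of_nonneg hε₂]
          exact mul_le_mul_of_nonneg_left (abs_add_le _ _) hε₂
    _ ≤ (1 - ε) * (K * dist x y) + ε / 2 * (K * dist x y + K * dist x y) := by
        gcongr <;> exact hfi _
    _ = K * dist x y := by ring

end DiffusiveCoupling

/-- For β ≥ 1 and ε ∈ [0,1], every orbit of the coupled Gauss map lattice starting
in [β, β+1]^N converges to the homogeneous state at the unique fixed point of f. -/
theorem cml_gauss_converges (N : ℕ) [NeZero N] (β ε : ℝ) (hβ : 1 ≤ β)
    (hε : ε ∈ Set.Icc (0 : ℝ) 1) (xs : ℝ)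
    (hfix : Real.exp (-7.5 * xs ^ 2) + β = xs)
    (Φ : (Fin N → ℝ) → (Fin N → ℝ))
    (hΦ : ∀ x i, Φ x i =
        (1 - ε) * (Real.exp (-7.5 * (x i) ^ 2) + β)
          + (ε / 2) * ((Real.exp (-7.5 * (x (i + 1)) ^ 2) + β)
            + (Real.exp (-7.5 * (x (i - 1)) ^ 2) + β)))
    (x₀ : Fin N → ℝ) (hx₀ : ∀ i, x₀ i ∈ Set.Icc β (β + 1)) :
    Filter.Tendsto (fun n => Φ^[n] x₀) Filter.atTop (nhds (fun _ => xs)) := by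
  set f : ℝ → ℝ := fun y => Real.exp (-7.5 * y ^ 2) + β
  obtain rfl : Φ = diffusiveCoupling f ε := funext fun x => funext (hΦ x)
  have hf_mem : ∀ y, f y ∈ Icc β (β + 1) := exp_neg_mul_sq_add_mem_Icc (by norm_num) β
  have hf_lip : LipschitzOnWith (2 * 7.5 * Real.exp (-7.5)).toNNReal f (Icc β (β + 1)) :=
    (lipschitzOnWith_exp_neg_mul_sq_add (by norm_num) β).mono fun y hy => hβ.trans hy.1
  have hxs : xs ∈ Icc β (β + 1) := hfix ▸ hf_mem xs
  refine (lipschitzOnWith_diffusiveCoupling hε hf_lip).tendsto_iterate_of_isFixedPt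
    (Real.toNNReal_lt_one.mpr (two_mul_mul_exp_neg_lt_one _))
    (mapsTo_diffusiveCoupling (convex_Icc β (β + 1)) hε fun y _ => hf_mem y) (fun _ _ => hxs) ?_
    (fun i _ => hx₀ i)
  rw [Function.IsFixedPt, diffusiveCoupling_const]
  exact funext fun _ => hfix
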